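/- arXiv:1601.06126 — 2 statements merged into one kernel-verified Lean document; each statement's English description precedes it below -/
import Mathlib

section
/- Let s ≥ 2 and k ≥ 1 be integers, let θ be a bijection of the k-blocks (Fin k → Fin s) with θ (fun _ => 0) ≠ (fun _ => s − 1), and let F : ℝ → ℝ satisfy: for every admissible digit sequence a, F(∑_{n=0}^∞ a n / s^{n+1}) = ∑_{n=0}^∞ (Θ a) n / s^{n+1}. If the set of fixed points of θ (blocks b with θ b = b) has cardinality j with j ≥ 2, then the set of invariant points of F in [0,1), namely { x ∈ [0,1) : F x = x }, has Hausdorff dimension (log j) / (k · log s). (Paper's Lemma 8, first case.) -/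
/-!
Put `t = s ^ k`. Reading the base-`s` digits of `x` in blocks of `k` turns its expansion into
a base-`t` expansion whose digits are the values of the blocks. By uniqueness of admissible
expansions, an admissible `a` gives an invariant point of `F` exactly when `Θ a = a`, i.e. when
every block of `a` is fixed by `θ`; the remaining invariant points have `Θ a` non-admissible and
form a countable set. Up to countable sets, the invariant set is therefore the set of reals whose
base-`t` digits all lie in a set `D` of `j` digits, and its dimension is `log j / log t`.

The upper bound comes from covering that set by `j ^ n` intervals of length `t⁻ⁿ`. For the lower
bound, enumerate `D` increasingly by `ι`; the map `∑ ι(eₙ) t⁻ⁿ⁻¹ ↦ ∑ eₙ j⁻ⁿ⁻¹` sends the set onto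
`[0, 1)` and is Hölder of exponent `log j / log t`. Indeed, if `|x - y| ≤ t⁻ⁿ` then `⌊tⁿ x⌋` and
`⌊tⁿ y⌋` differ by at most one, and since `ι` is strictly monotone the integers formed by the first
`n` base-`j` digits then differ by at most one as well.
-/

open Set Filter Topology MeasureTheory Function
open scoped Finset

theorem Nat.mul_add_le_mul_add_iff {b p q d d' : ℕ} (hd : d < b) (hd' : d' < b) :
    b * p + d ≤ b * q + d' ↔ p < q ∨ p = q ∧ d ≤ d' := by
  constructor
  · intro h
    rcases lt_trichotomy p q with hpq | rfl | hpq
    · exact Or.inl hpq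
    · exact Or.inr ⟨rfl, by omega⟩
    · nlinarith [Nat.mul_le_mul_left b (Nat.succ_le_of_lt hpq)]
  · rintro (hpq | ⟨rfl, h⟩)
    · nlinarith [Nat.mul_le_mul_left b (Nat.succ_le_of_lt hpq)]
    · omega

theorem HolderOnWith.of_abs_sub_le {f : ℝ → ℝ} {s : Set ℝ} {C r : NNReal}
    (h : ∀ x ∈ s, ∀ y ∈ s, |f x - f y| ≤ C * |x - y| ^ (r : ℝ)) : HolderOnWith C r f s := by
  intro x hx y hy
  rw [edist_dist, edist_dist, Real.dist_eq, Real.dist_eq,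
    ENNReal.ofReal_rpow_of_nonneg (abs_nonneg _) r.coe_nonneg, ← ENNReal.ofReal_coe_nnreal,
    ← ENNReal.ofReal_mul C.coe_nonneg]
  exact ENNReal.ofReal_le_ofReal (h x hx y hy)

theorem Set.countable_setOf_eventually_eq {α : Type*} [Countable α] (τ : ℕ → α) :
    {a : ℕ → α | ∃ N, ∀ n ≥ N, a n = τ n}.Countable := by
  refine (countable_iUnion fun N => countable_range
    fun p : Fin N → α => fun n => if h : n < N then p ⟨n, h⟩ else τ n).mono ?_
  rintro a ⟨N, hN⟩
  refine mem_iUnion.2 ⟨N, fun i => a i, funext fun n => ?_⟩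
  dsimp only
  split_ifs with h
  · rfl
  · exact (hN n (not_lt.1 h)).symm

theorem dimH_le_of_subset_union_countable {X : Type*} [EMetricSpace X] {A B N : Set X}
    (h : A ⊆ B ∪ N) (hN : N.Countable) : dimH A ≤ dimH B :=
  (dimH_mono h).trans (by rw [dimH_union, hN.dimH_zero, max_eq_left zero_le])

namespace Real

section Digits

variable {b : ℕ}

def IsAdmissible (a : ℕ → Fin b) : Prop := ¬ ∃ N, ∀ n ≥ N, (a n : ℕ) = b - 1

/-- The integer whose base-`b` digits, most significant first, are `w 0, w 1, …`. -/
def wordValue {n : ℕ} : (Fin n → Fin b) ≃ Fin (b ^ n) :=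
  (Equiv.arrowCongr Fin.revPerm (Equiv.refl _)).trans finFunctionFinEquiv

theorem wordValue_apply {n : ℕ} (w : Fin n → Fin b) :
    (wordValue w : ℕ) = ∑ i, (w (Fin.rev i) : ℕ) * b ^ (i : ℕ) := by
  simp [wordValue, Fin.revPerm]

def prefixValue (a : ℕ → Fin b) (n : ℕ) : ℕ := wordValue (fun i : Fin n => a i)

theorem prefixValue_lt (a : ℕ → Fin b) (n : ℕ) : prefixValue a n < b ^ n :=
  (wordValue _).isLt

@[simp] theorem prefixValue_zero (a : ℕ → Fin b) : prefixValue a 0 = 0 := by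
  simp [prefixValue]

theorem prefixValue_succ (a : ℕ → Fin b) (n : ℕ) :
    prefixValue a (n + 1) = b * prefixValue a n + a n := by
  simp only [prefixValue, wordValue_apply, Fin.sum_univ_succ, Fin.rev_succ, Fin.rev_zero,
    Finset.mul_sum]
  simp [pow_succ, mul_comm, mul_assoc, add_comm]

theorem prefixValue_add (a : ℕ → Fin b) (m l : ℕ) :
    prefixValue a (m + l) = b ^ l * prefixValue a m + prefixValue (fun i => a (m + i)) l := by
  induction l with
  | zero => simp
  | succ l ih => rw [← add_assoc, prefixValue_succ, prefixValue_succ, ih]; ring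

theorem exists_prefixValue_eq [NeZero b] {n m : ℕ} (hm : m < b ^ n) :
    ∃ a : ℕ → Fin b, prefixValue a n = m := by
  let w := wordValue.symm ⟨m, hm⟩
  refine ⟨fun i => if h : i < n then w ⟨i, h⟩ else 0, ?_⟩
  simp [prefixValue, w]

theorem prefixValue_eq_pow_mul_sum (a : ℕ → Fin b) (n : ℕ) :
    (prefixValue a n : ℝ) = b ^ n * ∑ i ∈ Finset.range n, ofDigitsTerm a i := by
  have hb : (b : ℝ) ≠ 0 := by exact_mod_cast (Fin.pos (a 0)).ne'
  induction n with
  | zero => simp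
  | succ n ih =>
    rw [prefixValue_succ, Finset.sum_range_succ, ofDigitsTerm]
    push_cast
    rw [ih]
    field_simp
    ring

theorem ofDigits_eq_prefixValue_add (a : ℕ → Fin b) (n : ℕ) :
    ofDigits a = (prefixValue a n + ofDigits (fun i => a (i + n))) / b ^ n := by
  have hb : (b : ℝ) ≠ 0 := by exact_mod_cast (Fin.pos (a 0)).ne'
  rw [ofDigits_eq_sum_add_ofDigits a n, prefixValue_eq_pow_mul_sum]
  field_simp

theorem tendsto_prefixValue_div_pow (a : ℕ → Fin b) :
    Tendsto (fun n => (prefixValue a n : ℝ) / b ^ n) atTop (𝓝 (ofDigits a)) := by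
  have hb : (b : ℝ) ≠ 0 := by exact_mod_cast (Fin.pos (a 0)).ne'
  simp_rw [prefixValue_eq_pow_mul_sum, mul_div_cancel_left₀ _ (pow_ne_zero _ hb)]
  exact summable_ofDigitsTerm.hasSum.tendsto_sum_nat

theorem ofDigits_eq_tsum (a : ℕ → Fin b) :
    ofDigits a = ∑' n, ((a n : ℕ) : ℝ) / (b : ℝ) ^ (n + 1) := by
  simp [ofDigits, ofDigitsTerm, div_eq_mul_inv]

namespace IsAdmissible

variable {a : ℕ → Fin b}

theorem one_lt_base (ha : IsAdmissible a) : 1 < b := by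
  have := Fin.pos (a 0)
  by_contra! hb
  exact ha ⟨0, fun n _ => by have := (a n).isLt; omega⟩

theorem exists_lt (ha : IsAdmissible a) (N : ℕ) : ∃ n ≥ N, (a n : ℕ) < b - 1 := by
  by_contra! h
  exact ha ⟨N, fun n hn => le_antisymm (by have := (a n).isLt; omega) (h n hn)⟩

theorem shift (ha : IsAdmissible a) (m : ℕ) : IsAdmissible (fun i => a (i + m)) := by
  rintro ⟨N, hN⟩
  refine ha ⟨N + m, fun n hn => ?_⟩
  simpa [Nat.sub_add_cancel (by omega : m ≤ n)] using hN (n - m) (by omega)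

theorem comp_strictMono {t : ℕ} {ι : Fin b → Fin t} (ha : IsAdmissible a)
    (hι : StrictMono ι) : IsAdmissible (ι ∘ a) := by
  rintro ⟨N, hN⟩
  obtain ⟨n, hn, hlt⟩ := ha.exists_lt N
  have : ι (a n) < ι ⟨b - 1, by omega⟩ := hι (Fin.mk_lt_mk.mpr hlt)
  have := (ι ⟨b - 1, by omega⟩).isLt
  have := hN n hn
  simp only [Function.comp_apply] at this
  omega

end IsAdmissible

theorem ofDigits_lt_one {a : ℕ → Fin b} (ha : IsAdmissible a) : ofDigits a < 1 := by
  have hb := ha.one_lt_base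
  obtain ⟨n, -, hn⟩ := ha.exists_lt 0
  rw [← ofDigits_const_last_eq_one' hb]
  refine Summable.tsum_lt_tsum (i := n) (fun i => ?_) ?_ summable_ofDigitsTerm
    summable_ofDigitsTerm
  · unfold ofDigitsTerm
    gcongr
    exact_mod_cast Nat.le_sub_one_of_lt (a i).isLt
  · unfold ofDigitsTerm
    gcongr

theorem floor_pow_mul_ofDigits {a : ℕ → Fin b} (ha : IsAdmissible a) (n : ℕ) :
    ⌊(b : ℝ) ^ n * ofDigits a⌋₊ = prefixValue a n := by
  have hb : (0 : ℝ) < b ^ n := by have := ha.one_lt_base; positivity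
  rw [ofDigits_eq_prefixValue_add a n, mul_div_cancel₀ _ hb.ne',
    Nat.floor_eq_iff (add_nonneg (Nat.cast_nonneg _) (ofDigits_nonneg _))]
  exact ⟨by linarith [ofDigits_nonneg (fun i => a (i + n))],
    by linarith [ofDigits_lt_one (ha.shift n)]⟩

theorem digits_ofDigits [NeZero b] {a : ℕ → Fin b} (ha : IsAdmissible a) :
    digits (ofDigits a) b = a := by
  funext n
  rw [digits, mul_comm, floor_pow_mul_ofDigits ha, prefixValue_succ]
  ext
  simp [Nat.mod_eq_of_lt (a n).isLt]

theorem injOn_ofDigits : InjOn (ofDigits (b := b)) {a | IsAdmissible a} := by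
  intro a ha a' ha' h
  have : NeZero b := ⟨(Fin.pos (a 0)).ne'⟩
  rw [← digits_ofDigits ha, ← digits_ofDigits ha', h]

theorem isAdmissible_digits [NeZero b] (hb : 1 < b) {x : ℝ} (hx : x ∈ Ico 0 1) :
    IsAdmissible (digits x b) := by
  rintro ⟨N, hN⟩
  have htail : (fun i => digits x b (i + N)) = fun _ => ⟨b - 1, Nat.sub_one_lt_of_lt hb⟩ :=
    funext fun i => Fin.ext (hN _ (by omega))
  have hsplit := ofDigits_eq_prefixValue_add (digits x b) N
  rw [ofDigits_digits hb hx, htail, ofDigits_const_last_eq_one' hb,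
    eq_div_iff (by positivity)] at hsplit
  have hfloor := ofDigits_digits_sum_eq (b := b) hx N
  rw [← prefixValue_eq_pow_mul_sum] at hfloor
  have := Nat.lt_floor_add_one ((b : ℝ) ^ N * x)
  rw [← hfloor] at this
  linarith

theorem ofDigits_sub_ofDigits_le {b n : ℕ} {a a' : ℕ → Fin b}
    (h : prefixValue a n ≤ prefixValue a' n + 1) : ofDigits a - ofDigits a' ≤ 2 / b ^ n := by
  have hb : (0 : ℝ) < b ^ n := by have := Fin.pos (a 0); positivity
  rw [ofDigits_eq_prefixValue_add a n, ofDigits_eq_prefixValue_add a' n, ← sub_div]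
  gcongr
  have : (prefixValue a n : ℝ) ≤ prefixValue a' n + 1 := by exact_mod_cast h
  linarith [ofDigits_le_one (fun i => a (i + n)), ofDigits_nonneg (fun i => a' (i + n))]

theorem prefixValue_le_add_one {b n : ℕ} {a a' : ℕ → Fin b} (ha : IsAdmissible a)
    (ha' : IsAdmissible a') (h : ofDigits a ≤ ofDigits a' + ((b : ℝ) ^ n)⁻¹) :
    prefixValue a n ≤ prefixValue a' n + 1 := by
  have hb : (0 : ℝ) < b ^ n := by have := ha.one_lt_base; positivity
  rw [← floor_pow_mul_ofDigits ha, ← floor_pow_mul_ofDigits ha',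
    ← Nat.floor_add_one (by positivity [ofDigits_nonneg a'])]
  refine Nat.floor_le_floor ?_
  calc (b : ℝ) ^ n * ofDigits a ≤ b ^ n * (ofDigits a' + ((b : ℝ) ^ n)⁻¹) := by gcongr
    _ = b ^ n * ofDigits a' + 1 := by field_simp

theorem countable_setOf_not_isAdmissible :
    {a : ℕ → Fin b | ¬IsAdmissible a}.Countable := by
  refine ((Set.countable_setOf_eventually_eq fun _ => b - 1).preimage
    (f := fun a : ℕ → Fin b => fun n => (a n : ℕ)) ?_).mono fun a ha => ?_
  · exact fun a a' h => funext fun n => Fin.ext (congrFun h n)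
  · simpa [IsAdmissible] using ha

end Digits

section DigitSubset

variable {j t : ℕ} {ι : Fin j → Fin t}

theorem prefixValue_comp_le_iff (hι : StrictMono ι) (n : ℕ) (e f : ℕ → Fin j) :
    prefixValue (ι ∘ e) n ≤ prefixValue (ι ∘ f) n ↔ prefixValue e n ≤ prefixValue f n := by
  induction n generalizing e f with
  | zero => simp
  | succ n ih =>
    have hlt (e f : ℕ → Fin j) :
        prefixValue (ι ∘ e) n < prefixValue (ι ∘ f) n ↔ prefixValue e n < prefixValue f n := by
      simpa only [not_le] using (ih f e).not
    simp only [prefixValue_succ, Function.comp_apply]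
    rw [Nat.mul_add_le_mul_add_iff (ι (e n)).isLt (ι (f n)).isLt,
      Nat.mul_add_le_mul_add_iff (e n).isLt (f n).isLt, hlt, le_antisymm_iff, le_antisymm_iff,
      ih, ih, Fin.val_fin_le, Fin.val_fin_le, hι.le_iff_le]

theorem prefixValue_comp_lt_comp (hι : StrictMono ι) {n : ℕ} {e f : ℕ → Fin j}
    (h : prefixValue e n < prefixValue f n) : prefixValue (ι ∘ e) n < prefixValue (ι ∘ f) n := by
  simpa only [not_le] using (prefixValue_comp_le_iff hι n f e).not.mpr (not_le.mpr h)

theorem prefixValue_comp_add_two_le (hι : StrictMono ι) {n : ℕ} {e f : ℕ → Fin j}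
    (h : prefixValue e n + 2 ≤ prefixValue f n) :
    prefixValue (ι ∘ e) n + 2 ≤ prefixValue (ι ∘ f) n := by
  have : NeZero j := ⟨(Fin.pos (e 0)).ne'⟩
  obtain ⟨g, hg⟩ := exists_prefixValue_eq (b := j) (n := n) (m := prefixValue e n + 1)
    (by have := prefixValue_lt f n; omega)
  have h₁ := prefixValue_comp_lt_comp hι (n := n) (e := e) (f := g) (by omega)
  have h₂ := prefixValue_comp_lt_comp hι (n := n) (e := g) (f := f) (by omega)
  omega

theorem abs_ofDigits_sub_le_of_comp (hι : StrictMono ι) {e f : ℕ → Fin j}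
    (he : IsAdmissible e) (hf : IsAdmissible f) {n : ℕ}
    (h : |ofDigits (ι ∘ e) - ofDigits (ι ∘ f)| ≤ ((t : ℝ) ^ n)⁻¹) :
    |ofDigits e - ofDigits f| ≤ 2 / j ^ n := by
  have key (e f : ℕ → Fin j) (he : IsAdmissible e) (hf : IsAdmissible f)
      (h : ofDigits (ι ∘ e) ≤ ofDigits (ι ∘ f) + ((t : ℝ) ^ n)⁻¹) :
      ofDigits e - ofDigits f ≤ 2 / j ^ n := by
    refine ofDigits_sub_ofDigits_le ?_
    by_contra! hlt
    have := prefixValue_comp_add_two_le hι (n := n) (e := f) (f := e) (by omega)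
    have := prefixValue_le_add_one (he.comp_strictMono hι) (hf.comp_strictMono hι) h
    omega
  rw [abs_le] at h ⊢
  exact ⟨by linarith [key f e hf he (by linarith)], key e f he hf (by linarith)⟩

theorem inv_pow_rpow_logb (ht : 1 < t) (hj : 0 < j) (m : ℕ) :
    (((t : ℝ) ^ m)⁻¹) ^ logb t j = ((j : ℝ) ^ m)⁻¹ := by
  have ht' : (1 : ℝ) < t := by exact_mod_cast ht
  rw [inv_rpow (by positivity), ← rpow_natCast, ← rpow_mul (by positivity), mul_comm,
    rpow_mul (by positivity), rpow_logb (by positivity) ht'.ne' (by exact_mod_cast hj),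
    rpow_natCast]

theorem ofDigits_invFun_digits [NeZero t] [Nonempty (Fin j)] (hι : StrictMono ι)
    {e : ℕ → Fin j} (he : IsAdmissible e) :
    ofDigits (invFun ι ∘ digits (ofDigits (ι ∘ e)) t) = ofDigits e := by
  rw [digits_ofDigits (he.comp_strictMono hι), ← Function.comp_assoc,
    (leftInverse_invFun hι.injective).comp_eq_id, Function.id_comp]

theorem holderOnWith_ofDigits_invFun_digits [NeZero t] [Nonempty (Fin j)] (hι : StrictMono ι) :
    HolderOnWith (2 * j) (logb t j).toNNReal (fun x => ofDigits (invFun ι ∘ digits x t))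
      ((fun e => ofDigits (ι ∘ e)) '' {e | IsAdmissible e}) := by
  refine HolderOnWith.of_abs_sub_le ?_
  rintro _ ⟨e, he, rfl⟩ _ ⟨f, hf, rfl⟩
  simp only [ofDigits_invFun_digits hι he, ofDigits_invFun_digits hι hf]
  have hj := he.one_lt_base
  have ht : (1 : ℝ) < t := by exact_mod_cast hj.trans_le (Fin.le_of_injective ι hι.injective)
  rcases eq_or_ne (ofDigits (ι ∘ e)) (ofDigits (ι ∘ f)) with hef | hef
  · have := injOn_ofDigits (he.comp_strictMono hι) (hf.comp_strictMono hι) hef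
    rw [hι.injective.comp_left this, sub_self, abs_zero]
    positivity
  set r := |ofDigits (ι ∘ e) - ofDigits (ι ∘ f)|
  have hr0 : 0 < r := abs_pos.2 (sub_ne_zero.2 hef)
  have hr1 : r ≤ 1 := abs_sub_le_of_nonneg_of_le (ofDigits_nonneg _) (ofDigits_le_one _)
    (ofDigits_nonneg _) (ofDigits_le_one _)
  have hd : 0 ≤ logb t j := logb_nonneg ht (by exact_mod_cast hj.le)
  obtain ⟨n, hn, hn'⟩ := exists_nat_pow_near (one_le_inv_iff₀.2 ⟨hr0, hr1⟩) ht
  calc |ofDigits e - ofDigits f| ≤ 2 / j ^ n := abs_ofDigits_sub_le_of_comp hι he hf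
        ((le_inv_comm₀ hr0 (by positivity : (0 : ℝ) < t ^ n)).2 hn)
    _ = 2 * j * ((j : ℝ) ^ (n + 1))⁻¹ := by
        have : (j : ℝ) ≠ 0 := by positivity
        field_simp
        ring
    _ = 2 * j * (((t : ℝ) ^ (n + 1))⁻¹) ^ logb t j := by
        rw [inv_pow_rpow_logb (by exact_mod_cast ht) (by omega)]
    _ ≤ 2 * j * r ^ logb t j := by
        gcongr
        exact (inv_le_comm₀ (by positivity : (0 : ℝ) < t ^ (n + 1)) hr0).2 hn'.le
    _ = ((2 * j : NNReal) : ℝ) * r ^ ((logb t j).toNNReal : ℝ) := by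
        simp [coe_toNNReal _ hd]

theorem le_dimH_range_ofDigits_comp (hι : StrictMono ι) (hj : 2 ≤ j) :
    ENNReal.ofReal (logb t j) ≤ dimH (range fun e : ℕ → Fin j => ofDigits (ι ∘ e)) := by
  have hjt := Fin.le_of_injective ι hι.injective
  have : NeZero j := ⟨by omega⟩
  have : NeZero t := ⟨by omega⟩
  have hd : 0 < (logb t j).toNNReal :=
    toNNReal_pos.2 (logb_pos (by exact_mod_cast (by omega : 1 < t))
      (by exact_mod_cast (by omega : 1 < j)))
  have hsurj : Ico (0 : ℝ) 1 ⊆ (fun x => ofDigits (invFun ι ∘ digits x t)) ''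
      ((fun e => ofDigits (ι ∘ e)) '' {e | IsAdmissible e}) := by
    intro y hy
    have hy' := isAdmissible_digits (b := j) (by omega) hy
    refine ⟨_, ⟨_, hy', rfl⟩, ?_⟩
    simp only [ofDigits_invFun_digits hι hy', ofDigits_digits (b := j) (by omega) hy]
  have h₁ : (1 : ENNReal) ≤ dimH ((fun e => ofDigits (ι ∘ e)) '' {e | IsAdmissible e}) /
      (logb t j).toNNReal :=
    calc (1 : ENNReal) = dimH (Ico (0 : ℝ) 1) := by
          rw [dimH_of_nonempty_interior (by simp), Module.finrank_self, Nat.cast_one]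
      _ ≤ _ := dimH_mono hsurj
      _ ≤ _ := (holderOnWith_ofDigits_invFun_digits hι).dimH_image_le hd
  rw [ENNReal.le_div_iff_mul_le (by simp [hd.ne']) (by simp), one_mul] at h₁
  exact h₁.trans (dimH_mono (image_subset_range _ _))

theorem ediam_image_ofDigits_comp_le (n : ℕ) (w : Fin n → Fin j) :
    Metric.ediam ((fun e => ofDigits (ι ∘ e)) '' {e | ∀ i : Fin n, e i = w i}) ≤
      ENNReal.ofReal ((t : ℝ) ^ n)⁻¹ := by
  refine Metric.ediam_le ?_
  rintro _ ⟨e, he, rfl⟩ _ ⟨f, hf, rfl⟩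
  rw [edist_dist, dist_eq]
  exact ENNReal.ofReal_le_ofReal (abs_ofDigits_sub_ofDigits_le fun i hi => by
    simp [he ⟨i, hi⟩, hf ⟨i, hi⟩])

theorem dimH_range_ofDigits_comp_le (ι : Fin j → Fin t) (hj : 0 < j) (ht : 1 < t) :
    dimH (range fun e : ℕ → Fin j => ofDigits (ι ∘ e)) ≤ ENNReal.ofReal (logb t j) := by
  have ht' : (1 : ℝ) < t := by exact_mod_cast ht
  have hd : 0 ≤ logb t j := logb_nonneg ht' (by exact_mod_cast hj)
  let cylinder (n : ℕ) (w : Fin n → Fin j) : Set ℝ :=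
    (fun e => ofDigits (ι ∘ e)) '' {e | ∀ i : Fin n, e i = w i}
  have hdiam := ediam_image_ofDigits_comp_le (ι := ι)
  have hsum (n : ℕ) : ∑ w, Metric.ediam (cylinder n w) ^ logb t j ≤ 1 :=
    calc ∑ w, Metric.ediam (cylinder n w) ^ logb t j
        ≤ ∑ _w : Fin n → Fin j, ENNReal.ofReal ((t : ℝ) ^ n)⁻¹ ^ logb t j :=
          Finset.sum_le_sum fun w _ => ENNReal.rpow_le_rpow (hdiam n w) hd
      _ = (j : ENNReal) ^ n * ((j : ENNReal) ^ n)⁻¹ := by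
          rw [Finset.sum_const, Finset.card_univ, Fintype.card_fun, Fintype.card_fin,
            Fintype.card_fin, ENNReal.ofReal_rpow_of_nonneg (by positivity) hd,
            inv_pow_rpow_logb ht hj, ENNReal.ofReal_inv_of_pos (by positivity),
            ENNReal.ofReal_pow (by positivity), ENNReal.ofReal_natCast, nsmul_eq_mul,
            Nat.cast_pow]
      _ = 1 := ENNReal.mul_inv_cancel (by simp; omega) (by simp)
  have hμ : μH[logb t j] (range fun e : ℕ → Fin j => ofDigits (ι ∘ e)) ≤ 1 := by
    refine (Measure.hausdorffMeasure_le_liminf_sum _ _ (fun n => ENNReal.ofReal ((t : ℝ) ^ n)⁻¹)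
      ?_ cylinder (Eventually.of_forall hdiam) (Eventually.of_forall fun n => ?_)).trans
      (liminf_le_of_frequently_le' (Eventually.of_forall (f := atTop) hsum).frequently)
    · rw [← ENNReal.ofReal_zero]
      exact ENNReal.tendsto_ofReal
        (tendsto_inv_atTop_zero.comp (tendsto_pow_atTop_atTop_of_one_lt ht'))
    · rintro _ ⟨e, rfl⟩
      exact mem_iUnion.2 ⟨fun i => e i, e, fun i => rfl, rfl⟩
  refine dimH_le_of_hausdorffMeasure_ne_top ?_
  rw [coe_toNNReal _ hd]
  exact (hμ.trans_lt ENNReal.one_lt_top).ne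

theorem dimH_range_ofDigits_comp (hι : StrictMono ι) (hj : 2 ≤ j) :
    dimH (range fun e : ℕ → Fin j => ofDigits (ι ∘ e)) = ENNReal.ofReal (logb t j) := by
  have hjt := Fin.le_of_injective ι hι.injective
  exact le_antisymm (dimH_range_ofDigits_comp_le ι (by omega) (by omega))
    (le_dimH_range_ofDigits_comp hι hj)

theorem dimH_setOf_ofDigits_mem {D : Finset (Fin t)} (hD : 2 ≤ #D) :
    dimH {x | ∃ a : ℕ → Fin t, (∀ n, a n ∈ D) ∧ ofDigits a = x} =
      ENNReal.ofReal (logb t #D) := by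
  let ι := D.orderEmbOfFin rfl
  convert dimH_range_ofDigits_comp ι.strictMono hD using 2
  ext x
  constructor
  · rintro ⟨a, ha, rfl⟩
    have (n : ℕ) : a n ∈ range ι := by simpa [ι, Finset.range_orderEmbOfFin] using ha n
    choose e he using this
    exact ⟨e, congrArg ofDigits (funext he)⟩
  · rintro ⟨e, rfl⟩
    exact ⟨ι ∘ e, fun n => D.orderEmbOfFin_mem rfl (e n), rfl⟩

end DigitSubset

section Blocks

variable {α : Type*} {s k : ℕ}

def digitBlocks (k : ℕ) (a : ℕ → α) (m : ℕ) : Fin k → α := fun i => a (k * m + i)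

theorem digitBlocks_injective [NeZero k] :
    Injective (digitBlocks k : (ℕ → α) → ℕ → Fin k → α) := by
  intro a a' h
  funext n
  simpa [digitBlocks, Nat.div_add_mod] using
    congrFun (congrFun h (n / k)) ⟨n % k, Nat.mod_lt _ (NeZero.pos k)⟩

theorem digitBlocks_surjective [NeZero k] :
    Surjective (digitBlocks k : (ℕ → α) → ℕ → Fin k → α) := by
  intro c
  refine ⟨fun n => c (n / k) ⟨n % k, Nat.mod_lt _ (NeZero.pos k)⟩, ?_⟩
  funext m i
  have hdiv : (k * m + i) / k = m := by
    rw [Nat.mul_add_div (NeZero.pos k), Nat.div_eq_of_lt i.isLt, add_zero]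
  have hmod : (k * m + i) % k = i := by rw [Nat.mul_add_mod, Nat.mod_eq_of_lt i.isLt]
  simp only [digitBlocks, hdiv, hmod]

theorem prefixValue_wordValue_digitBlocks (a : ℕ → Fin s) (n : ℕ) :
    prefixValue (fun m => wordValue (digitBlocks k a m)) n = prefixValue a (k * n) := by
  induction n with
  | zero => simp
  | succ n ih =>
    rw [prefixValue_succ, ih, Nat.mul_succ, prefixValue_add]
    rfl

theorem ofDigits_wordValue_digitBlocks [NeZero k] (a : ℕ → Fin s) :
    ofDigits (fun m => wordValue (digitBlocks k a m)) = ofDigits a := by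
  refine tendsto_nhds_unique (tendsto_prefixValue_div_pow _) ?_
  refine ((tendsto_prefixValue_div_pow a).comp
    (tendsto_id.const_mul_atTop' (NeZero.pos k))).congr fun n => ?_
  simp [prefixValue_wordValue_digitBlocks, pow_mul]

theorem dimH_setOf_ofDigits_digitBlocks_mem [NeZero k] {S : Set (Fin k → Fin s)}
    (hS : 2 ≤ S.ncard) :
    dimH {x | ∃ a : ℕ → Fin s, (∀ m, digitBlocks k a m ∈ S) ∧ ofDigits a = x} =
      ENNReal.ofReal (logb (s ^ k : ℕ) S.ncard) := by
  classical
  let D := S.toFinset.image wordValue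
  have hD : #D = S.ncard := by
    rw [Finset.card_image_of_injective _ wordValue.injective, Set.ncard_eq_toFinset_card']
  rw [← hD] at hS ⊢
  convert dimH_setOf_ofDigits_mem hS using 2
  ext x
  constructor
  · rintro ⟨a, ha, rfl⟩
    exact ⟨_, fun m => Finset.mem_image_of_mem _ (Set.mem_toFinset.2 (ha m)),
      ofDigits_wordValue_digitBlocks a⟩
  · rintro ⟨c, hc, rfl⟩
    obtain ⟨a, ha⟩ := digitBlocks_surjective (k := k) fun m => wordValue.symm (c m)
    refine ⟨a, fun m => ?_, ?_⟩
    · obtain ⟨w, hw, hwc⟩ := Finset.mem_image.1 (hc m)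
      simpa [ha, ← hwc] using hw
    · rw [← ofDigits_wordValue_digitBlocks (k := k), ha]
      simp

end Blocks

section BlockPermutation

variable {s k : ℕ} {θ : Equiv.Perm (Fin k → Fin s)} {Θ : (ℕ → Fin s) → ℕ → Fin s}
  (hΘ : ∀ a m, digitBlocks k (Θ a) m = θ (digitBlocks k a m))
include hΘ

theorem eq_self_iff_forall_digitBlocks [NeZero k] (a : ℕ → Fin s) :
    Θ a = a ↔ ∀ m, θ (digitBlocks k a m) = digitBlocks k a m := by
  rw [← (digitBlocks_injective (k := k)).eq_iff, funext_iff]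
  simp only [hΘ]

theorem injective_of_digitBlocks [NeZero k] : Injective Θ := fun a a' h =>
  digitBlocks_injective (funext fun m => θ.injective (by rw [← hΘ, ← hΘ, h]))

variable {F : ℝ → ℝ} (hF : ∀ a, IsAdmissible a → F (ofDigits a) = ofDigits (Θ a))
include hF

theorem setOf_isFixedPt_subset_union [NeZero k] (hs : 1 < s) :
    {x ∈ Ico 0 1 | F x = x} ⊆
      {x | ∃ a : ℕ → Fin s, (∀ m, digitBlocks k a m ∈ {b | θ b = b}) ∧ ofDigits a = x} ∪
        ofDigits '' (Θ ⁻¹' {a | ¬IsAdmissible a}) := by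
  rintro x ⟨hx, hFx⟩
  have : NeZero s := ⟨by omega⟩
  have ha := isAdmissible_digits hs hx
  have hxa : ofDigits (digits x s) = x := ofDigits_digits hs hx
  by_cases hΘa : IsAdmissible (Θ (digits x s))
  · have hfix : Θ (digits x s) = digits x s :=
      injOn_ofDigits hΘa ha (by rw [← hF _ ha, hxa, hFx])
    exact Or.inl ⟨_, (eq_self_iff_forall_digitBlocks hΘ _).1 hfix, hxa⟩
  · exact Or.inr ⟨_, hΘa, hxa⟩

theorem subset_setOf_isFixedPt_union [NeZero k] :
    {x | ∃ a : ℕ → Fin s, (∀ m, digitBlocks k a m ∈ {b | θ b = b}) ∧ ofDigits a = x} ⊆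
      {x ∈ Ico 0 1 | F x = x} ∪ ofDigits '' {a : ℕ → Fin s | ¬IsAdmissible a} := by
  rintro _ ⟨a, hfix, rfl⟩
  by_cases ha : IsAdmissible a
  · refine Or.inl ⟨⟨ofDigits_nonneg a, ofDigits_lt_one ha⟩, ?_⟩
    rw [hF a ha, (eq_self_iff_forall_digitBlocks hΘ a).2 hfix]
  · exact Or.inr ⟨a, ha, rfl⟩

end BlockPermutation

end Real

open Real in
/-- Paper's Lemma 8, first case: if the block permutation `θ` defining `f^s_k`
has `j ≥ 2` fixed blocks, then the set of invariant points of `f^s_k` in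
`[0,1)` has Hausdorff dimension `(log j)/(k · log s)`. -/
theorem stmt_8 (s k : ℕ) (hs : 2 ≤ s) (hk : 1 ≤ k)
    (θ : (Fin k → Fin s) ≃ (Fin k → Fin s))
    (Θ : (ℕ → Fin s) → (ℕ → Fin s))
    (hΘ : ∀ (a : ℕ → Fin s) (m : ℕ) (i : Fin k),
      Θ a (k * m + (i : ℕ)) = θ (fun j => a (k * m + (j : ℕ))) i)
    (F : ℝ → ℝ)
    (hF : ∀ a : ℕ → Fin s, (¬ ∃ N, ∀ n ≥ N, (a n : ℕ) = s - 1) →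
      F (∑' n : ℕ, ((a n : ℕ) : ℝ) / (s : ℝ) ^ (n + 1)) =
        ∑' n : ℕ, ((Θ a n : ℕ) : ℝ) / (s : ℝ) ^ (n + 1))
    (j : ℕ) (hj : 2 ≤ j)
    (hcard : {b : Fin k → Fin s | θ b = b}.ncard = j) :
    dimH {x ∈ Set.Ico (0 : ℝ) 1 | F x = x} =
      ENNReal.ofReal (Real.log j / (k * Real.log s)) := by
  have : NeZero k := ⟨by omega⟩
  have hΘ' (a : ℕ → Fin s) (m : ℕ) : digitBlocks k (Θ a) m = θ (digitBlocks k a m) :=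
    funext (hΘ a m)
  have hF' (a : ℕ → Fin s) (ha : IsAdmissible a) : F (ofDigits a) = ofDigits (Θ a) := by
    simpa only [ofDigits_eq_tsum] using hF a ha
  rw [le_antisymm
      (dimH_le_of_subset_union_countable (setOf_isFixedPt_subset_union hΘ' hF' hs)
        ((countable_setOf_not_isAdmissible.preimage (injective_of_digitBlocks hΘ')).image _))
      (dimH_le_of_subset_union_countable (subset_setOf_isFixedPt_union hΘ' hF')
        (countable_setOf_not_isAdmissible.image _)),
    dimH_setOf_ofDigits_digitBlocks_mem (hcard ▸ hj), hcard, logb, Nat.cast_pow, log_pow]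
end

section
/- Let s ≥ 2 be an integer and let g : ℝ → ℝ satisfy: for every admissible digit sequence a, g(∑_{n=0}^∞ a n / s^{n+1}) = ∑_{n=0}^∞ (−1)^{n+1} a n / s^{n+1}. Then the graph of g over [0,1), i.e. the set { p : ℝ × ℝ | ∃ x ∈ [0,1), p = (x, g x) }, has Hausdorff dimension equal to 1. (Paper's Theorem 3 for the function f₊.) -/
/-!
The projection of the graph onto the first coordinate is `1`-Lipschitz with image `[0,1)`,
which gives `dimH ≥ 1`. Conversely, on `[0,1)` the function `g` is
`x ↦ ∑ (-1)^(n+1) aₙ / s^(n+1)`, a difference of two `s`-adic expansions (of the odd- and of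
the even-indexed digits), so points sharing their first `k` digits have values within `2 / s^k`
of each other. The graph over the `s^k` digit cylinders of level `k` is thus covered by `s^k` sets
of diameter `≤ 2 / s^k`, and for `d > 1` the sums `s^k (2 / s^k)^d` tend to `0`, so `μH[d]` of
the graph vanishes.
-/

open scoped ENNReal
open Filter Topology MeasureTheory

theorem hausdorffMeasure_eq_zero_of_forall_cover {X : Type*} [EMetricSpace X] [MeasurableSpace X]
    [BorelSpace X] {E : Set X} {b : ℕ} (hb : 1 < b) {C : ℝ≥0∞} (hC : C ≠ ∞)
    (t : (k : ℕ) → (Fin k → Fin b) → Set X) (hcover : ∀ k, E ⊆ ⋃ j, t k j)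
    (hdiam : ∀ k j, Metric.ediam (t k j) ≤ C * ((b : ℝ≥0∞) ^ k)⁻¹) {d : ℝ}
    (hd : 1 < d) : μH[d] E = 0 := by
  have hb' : (1 : ℝ≥0∞) < b := by exact_mod_cast hb
  have hd0 : 0 ≤ d := by linarith
  set ρ : ℝ≥0∞ := (b : ℝ≥0∞) * ((b : ℝ≥0∞) ^ d)⁻¹
  have hρ : ρ < 1 := by
    refine ENNReal.div_lt_of_lt_mul ?_
    simpa using ENNReal.rpow_lt_rpow_of_exponent_lt hb' (ENNReal.natCast_ne_top b) hd
  have hsum : ∀ k, ∑ j, Metric.ediam (t k j) ^ d ≤ C ^ d * ρ ^ k := fun k =>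
    calc ∑ j, Metric.ediam (t k j) ^ d
        ≤ ∑ _j : Fin k → Fin b, (C * ((b : ℝ≥0∞) ^ k)⁻¹) ^ d :=
          Finset.sum_le_sum fun j _ => ENNReal.rpow_le_rpow (hdiam k j) hd0
      _ = C ^ d * ρ ^ k := by
          have hcomm : ((b : ℝ≥0∞) ^ k) ^ d = ((b : ℝ≥0∞) ^ d) ^ k := by
            rw [← ENNReal.rpow_natCast, ← ENNReal.rpow_natCast, ← ENNReal.rpow_mul,
              ← ENNReal.rpow_mul, mul_comm]
          simp only [Finset.sum_const, Finset.card_univ, Fintype.card_fun, Fintype.card_fin,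
            nsmul_eq_mul, Nat.cast_pow]
          rw [ENNReal.mul_rpow_of_nonneg _ _ hd0, ENNReal.inv_rpow, hcomm, mul_pow,
            ENNReal.inv_pow]
          ring
  have hr : Tendsto (fun k : ℕ => C * ((b : ℝ≥0∞) ^ k)⁻¹) atTop (𝓝 0) := by
    simpa [ENNReal.inv_pow] using ENNReal.Tendsto.const_mul
      (ENNReal.tendsto_pow_atTop_nhds_zero_of_lt_one (ENNReal.inv_lt_one.2 hb')) (Or.inr hC)
  have hbound : Tendsto (fun k : ℕ => C ^ d * ρ ^ k) atTop (𝓝 0) := by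
    simpa using ENNReal.Tendsto.const_mul (ENNReal.tendsto_pow_atTop_nhds_zero_of_lt_one hρ)
      (Or.inr (ENNReal.rpow_ne_top_of_nonneg hd0 hC))
  refine nonpos_iff_eq_zero.1 ?_
  calc μH[d] E ≤ liminf (fun k => ∑ j, Metric.ediam (t k j) ^ d) atTop :=
        Measure.hausdorffMeasure_le_liminf_sum d E _ hr t (.of_forall hdiam) (.of_forall hcover)
    _ ≤ liminf (fun k : ℕ => C ^ d * ρ ^ k) atTop := liminf_le_liminf (.of_forall hsum)
    _ = 0 := hbound.liminf_eq

theorem dimH_le_one_of_forall_cover {X : Type*} [EMetricSpace X] [MeasurableSpace X]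
    [BorelSpace X] {E : Set X} {b : ℕ} (hb : 1 < b) {C : ℝ≥0∞} (hC : C ≠ ∞)
    (t : (k : ℕ) → (Fin k → Fin b) → Set X) (hcover : ∀ k, E ⊆ ⋃ j, t k j)
    (hdiam : ∀ k j, Metric.ediam (t k j) ≤ C * ((b : ℝ≥0∞) ^ k)⁻¹) :
    dimH E ≤ 1 := by
  refine dimH_le fun d hd => ?_
  by_contra! hd1
  rw [hausdorffMeasure_eq_zero_of_forall_cover hb hC t hcover hdiam (by exact_mod_cast hd1)] at hd
  exact ENNReal.zero_ne_top hd

theorem dimH_le_dimH_graphOn {α β : Type*} [EMetricSpace α] [EMetricSpace β] (f : α → β)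
    (s : Set α) : dimH s ≤ dimH (s.graphOn f) := by
  simpa [Set.image_fst_graphOn] using LipschitzWith.prod_fst.dimH_image_le (s.graphOn f)

namespace Real

/-- The paper's `f₊`, read on digit sequences. -/
noncomputable def negaOfDigits {b : ℕ} (a : ℕ → Fin b) : ℝ :=
  ∑' n, (-1 : ℝ) ^ (n + 1) * (a n : ℕ) / (b : ℝ) ^ (n + 1)

theorem negaOfDigits_eq_ofDigits_sub {b : ℕ} [NeZero b] (a : ℕ → Fin b) :
    negaOfDigits a = ofDigits (fun n => if Odd n then a n else 0) -
      ofDigits (fun n => if Even n then a n else 0) := by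
  rw [ofDigits, ofDigits, ← summable_ofDigitsTerm.tsum_sub summable_ofDigitsTerm, negaOfDigits]
  congr 1 with n
  rcases n.even_or_odd with hn | hn
  · simp [ofDigitsTerm, hn, Nat.not_odd_iff_even.2 hn, hn.add_one.neg_one_pow, div_eq_mul_inv]
  · simp [ofDigitsTerm, hn, Nat.not_even_iff_odd.2 hn, hn.add_one.neg_one_pow, div_eq_mul_inv]

theorem abs_negaOfDigits_sub_negaOfDigits_le {b : ℕ} [NeZero b] {x y : ℕ → Fin b} {n : ℕ}
    (hxy : ∀ i < n, x i = y i) :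
    |negaOfDigits x - negaOfDigits y| ≤ 2 * ((b : ℝ) ^ n)⁻¹ := by
  have hodd := abs_ofDigits_sub_ofDigits_le (x := fun i => if Odd i then x i else 0)
    (y := fun i => if Odd i then y i else 0) (n := n) fun i hi => by simp [hxy i hi]
  have heven := abs_ofDigits_sub_ofDigits_le (x := fun i => if Even i then x i else 0)
    (y := fun i => if Even i then y i else 0) (n := n) fun i hi => by simp [hxy i hi]
  rw [negaOfDigits_eq_ofDigits_sub, negaOfDigits_eq_ofDigits_sub, sub_sub_sub_comm]
  linarith [abs_sub (ofDigits (fun i => if Odd i then x i else 0) -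
    ofDigits (fun i => if Odd i then y i else 0)) (ofDigits (fun i => if Even i then x i else 0) -
    ofDigits (fun i => if Even i then y i else 0))]

theorem not_exists_forall_digits_eq_sub_one {b : ℕ} [NeZero b] (hb : 1 < b) {x : ℝ}
    (hx : x ∈ Set.Ico 0 1) : ¬ ∃ N, ∀ n ≥ N, (digits x b n : ℕ) = b - 1 := by
  rintro ⟨N, hN⟩
  have htail : (fun i => digits x b (i + N)) = fun _ => ⟨b - 1, Nat.sub_one_lt_of_lt hb⟩ :=
    funext fun i => Fin.ext (hN (i + N) (Nat.le_add_left N i))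
  have hsplit := ofDigits_eq_sum_add_ofDigits (digits x b) N
  rw [ofDigits_digits hb hx, htail, ofDigits_const_last_eq_one' hb, mul_one] at hsplit
  have hpos : (0 : ℝ) < (b : ℝ) ^ N := by positivity
  -- a tail of maximal digits makes `b ^ N * x` exceed its floor by exactly one
  have hexact : (b : ℝ) ^ N * x = ⌊(b : ℝ) ^ N * x⌋₊ + 1 := by
    rw [← ofDigits_digits_sum_eq hx N]
    conv_lhs => rw [hsplit]
    rw [mul_add, mul_inv_cancel₀ hpos.ne']
  linarith [Nat.lt_floor_add_one ((b : ℝ) ^ N * x)]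

theorem dist_negaOfDigits_digits_le {b : ℕ} [NeZero b] (hb : 1 < b) {x y : ℝ} {k : ℕ}
    (hx : x ∈ Set.Ico 0 1) (hy : y ∈ Set.Ico 0 1)
    (hxy : ∀ i < k, digits x b i = digits y b i) :
    dist (x, negaOfDigits (digits x b)) (y, negaOfDigits (digits y b)) ≤
      2 * ((b : ℝ) ^ k)⁻¹ := by
  refine max_le ?_ (abs_negaOfDigits_sub_negaOfDigits_le hxy)
  have hpos : (0 : ℝ) < ((b : ℝ) ^ k)⁻¹ := by positivity
  rw [Real.dist_eq, ← ofDigits_digits hb hx, ← ofDigits_digits hb hy]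
  linarith [abs_ofDigits_sub_ofDigits_le hxy]

theorem dimH_graphOn_negaOfDigits_digits_le_one {b : ℕ} [NeZero b] (hb : 1 < b) :
    dimH ((Set.Ico 0 1).graphOn fun x => negaOfDigits (digits x b)) ≤ 1 := by
  refine dimH_le_one_of_forall_cover hb (C := 2) ENNReal.ofNat_ne_top
    (fun k j => (Set.Ico 0 1 ∩ {x | ∀ i : Fin k, digits x b i = j i}).graphOn
      fun x => negaOfDigits (digits x b)) ?_ ?_
  · rintro k _ ⟨x, hx, rfl⟩
    exact Set.mem_iUnion.2 ⟨fun i => digits x b i, x, ⟨hx, fun _ => rfl⟩, rfl⟩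
  · intro k j
    refine Metric.ediam_le ?_
    rintro _ ⟨x, ⟨hx, hxj⟩, rfl⟩ _ ⟨y, ⟨hy, hyj⟩, rfl⟩
    have hval : ENNReal.ofReal (2 * ((b : ℝ) ^ k)⁻¹) = 2 * ((b : ℝ≥0∞) ^ k)⁻¹ := by
      rw [ENNReal.ofReal_mul zero_le_two, ENNReal.ofReal_inv_of_pos (by positivity),
        ENNReal.ofReal_pow b.cast_nonneg, ENNReal.ofReal_natCast, ENNReal.ofReal_ofNat]
    rw [← hval, edist_le_ofReal (by positivity)]
    exact dist_negaOfDigits_digits_le hb hx hy fun i hi =>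
      (hxj ⟨i, hi⟩).trans (hyj ⟨i, hi⟩).symm

end Real

open Real in
theorem eqOn_negaOfDigits_digits {s : ℕ} [NeZero s] (hs : 1 < s) {g : ℝ → ℝ}
    (hg : ∀ a : ℕ → ℕ, (∀ n, a n ≤ s - 1) → (¬ ∃ N, ∀ n ≥ N, a n = s - 1) →
      g (∑' n : ℕ, (a n : ℝ) / (s : ℝ) ^ (n + 1)) =
        ∑' n : ℕ, (-1 : ℝ) ^ (n + 1) * (a n : ℝ) / (s : ℝ) ^ (n + 1)) :
    Set.EqOn g (fun x => negaOfDigits (digits x s)) (Set.Ico 0 1) := by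
  intro x hx
  have hsum : ∑' n : ℕ, ((digits x s n : ℕ) : ℝ) / (s : ℝ) ^ (n + 1) = x := by
    simpa only [ofDigits, ofDigitsTerm, div_eq_mul_inv] using ofDigits_digits hs hx
  simpa [hsum, negaOfDigits] using hg (fun n => digits x s n)
    (fun n => Nat.le_sub_one_of_lt (digits x s n).isLt) (not_exists_forall_digits_eq_sub_one hs hx)

/-- Paper's Theorem 3 for the function `f₊`: the graph of `f₊` over `[0,1)` has
Hausdorff dimension `1`. -/
theorem stmt_16 (s : ℕ) (hs : 2 ≤ s) (g : ℝ → ℝ)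
    (hg : ∀ a : ℕ → ℕ, (∀ n, a n ≤ s - 1) → (¬ ∃ N, ∀ n ≥ N, a n = s - 1) →
      g (∑' n : ℕ, (a n : ℝ) / (s : ℝ) ^ (n + 1)) =
        ∑' n : ℕ, (-1 : ℝ) ^ (n + 1) * (a n : ℝ) / (s : ℝ) ^ (n + 1)) :
    dimH {p : ℝ × ℝ | ∃ x ∈ Set.Ico (0 : ℝ) 1, p = (x, g x)} = 1 := by
  have : NeZero s := ⟨by omega⟩
  have hgraph :
      {p : ℝ × ℝ | ∃ x ∈ Set.Ico (0 : ℝ) 1, p = (x, g x)} = (Set.Ico 0 1).graphOn g := by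
    ext ⟨x, y⟩
    simp [eq_comm]
  rw [hgraph]
  refine le_antisymm ?_ ?_
  · rw [Set.graphOn_inj.2 (eqOn_negaOfDigits_digits hs hg)]
    exact Real.dimH_graphOn_negaOfDigits_digits_le_one hs
  · calc (1 : ℝ≥0∞) = dimH (Set.Ico (0 : ℝ) 1) := by
          rw [Real.dimH_of_mem_nhds (Ico_mem_nhds (by norm_num : (0 : ℝ) < 1 / 2) (by norm_num))]
          simp
      _ ≤ _ := dimH_le_dimH_graphOn g _
end
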